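/- arXiv:2011.00511 — 3 statements merged into one kernel-verified Lean document; each statement's English description precedes it below -/
import Mathlib

section
/- Let (G,σ) be a BMG that is explained by a binary tree (T,σ). If ab|b' is a forbidden triple of (G,σ) with σ(b)=σ(b'), then (T,σ) displays the triple bb'|a. -/
/-- A rooted phylogenetic tree with leaf set `V`, encoded by its hierarchy of clusters
(the cluster of a vertex is the set of leaves below it; inner vertices of a phylogenetic
tree have at least two children, so vertices correspond bijectively to clusters). -/
structure PhyloTree (V : Type*) where
  clusters : Set (Set V)
  nonempty_of_mem : ∀ A ∈ clusters, A.Nonempty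
  univ_mem : Set.univ ∈ clusters
  singleton_mem : ∀ v : V, {v} ∈ clusters
  nested : ∀ A ∈ clusters, ∀ B ∈ clusters, A ⊆ B ∨ B ⊆ A ∨ Disjoint A B

namespace PhyloTree

variable {V : Type*}

/-- The cluster of the last common ancestor of `x` and `y`: the smallest cluster
containing both (the clusters containing `x` and `y` form a chain, so their
intersection is the smallest one). -/
def lca (T : PhyloTree V) (x y : V) : Set V :=
  ⋂₀ {A | A ∈ T.clusters ∧ x ∈ A ∧ y ∈ A}

/-- The rooted triple `xy|z` (on three pairwise distinct leaves) is displayed by `T`: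
`lca(x,y) ≺ lca(x,z) = lca(y,z)`. -/
def Displays (T : PhyloTree V) (x y z : V) : Prop :=
  x ≠ y ∧ x ≠ z ∧ y ≠ z ∧ T.lca x y ⊂ T.lca x z ∧ T.lca x z = T.lca y z

/-- `T` displays every triple of `R`; a triple `(x, y, z)` encodes `xy|z`. -/
def DisplaysSet (T : PhyloTree V) (R : Set (V × V × V)) : Prop :=
  ∀ t ∈ R, T.Displays t.1 t.2.1 t.2.2

/-- `r(T)`, the set of triples displayed by `T`. -/
def triples (T : PhyloTree V) : Set (V × V × V) :=
  {t | T.Displays t.1 t.2.1 t.2.2}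

/-- `T` is binary: every inner vertex (cluster with at least two leaves) has exactly
two children, i.e. splits into two disjoint proper subclusters. -/
def IsBinary (T : PhyloTree V) : Prop :=
  ∀ A ∈ T.clusters, 1 < A.ncard →
    ∃ B ∈ T.clusters, ∃ D ∈ T.clusters,
      Disjoint B D ∧ B ∪ D = A ∧ B ⊂ A ∧ D ⊂ A

/-- `T'` is a refinement of `T`: they have the same leaf set and `T` is obtained from
`T'` by contracting inner edges, i.e. every cluster of `T` is a cluster of `T'`. -/
def Refines (T' T : PhyloTree V) : Prop :=
  T.clusters ⊆ T'.clusters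

end PhyloTree

section BMG

variable {V C : Type*}

/-- `y` is a best match of `x` in the leaf-colored tree `(T,σ)`. -/
def bestMatch (T : PhyloTree V) (σ : V → C) (x y : V) : Prop :=
  σ x ≠ σ y ∧ ∀ y' : V, σ y' = σ y → T.lca x y ⊆ T.lca x y'

/-- The leaf-colored tree `(T,σ)` explains the vertex-colored digraph `(E,σ)`,
i.e. `(E,σ)` is the best match graph of `(T,σ)`. -/
def Explains (T : PhyloTree V) (σ : V → C) (E : V → V → Prop) : Prop :=
  ∀ x y, E x y ↔ bestMatch T σ x y

/-- `(E,σ)` is a best match graph. -/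
def IsBMG (E : V → V → Prop) (σ : V → C) : Prop :=
  ∃ T : PhyloTree V, Explains T σ E

/-- `(E,σ)` is binary-explainable. -/
def BinaryExplainable (E : V → V → Prop) (σ : V → C) : Prop :=
  ∃ T : PhyloTree V, T.IsBinary ∧ Explains T σ E

/-- The informative triples `R(G,σ)`: `(a,b,b')` encodes `ab|b'`. -/
def informativeTriples (E : V → V → Prop) (σ : V → C) : Set (V × V × V) :=
  {t | σ t.1 ≠ σ t.2.1 ∧ σ t.2.1 = σ t.2.2 ∧ E t.1 t.2.1 ∧ ¬ E t.1 t.2.2}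

/-- The forbidden triples `F(G,σ)`: `(a,b,b')` encodes `ab|b'`. -/
def forbiddenTriples (E : V → V → Prop) (σ : V → C) : Set (V × V × V) :=
  {t | σ t.1 ≠ σ t.2.1 ∧ σ t.2.1 = σ t.2.2 ∧ t.2.1 ≠ t.2.2 ∧ E t.1 t.2.1 ∧ E t.1 t.2.2}

/-- The extended triple set `R^bin(G,σ) = R(G,σ) ∪ {bb'|a : ab|b' ∈ F(G,σ)}`. -/
def Rbin (E : V → V → Prop) (σ : V → C) : Set (V × V × V) :=
  informativeTriples E σ ∪ {t | (t.2.2, t.1, t.2.1) ∈ forbiddenTriples E σ}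

/-- Properly colored: arcs only between vertices of distinct colors. -/
def ProperlyColored (E : V → V → Prop) (σ : V → C) : Prop :=
  ∀ x y, E x y → σ x ≠ σ y

/-- sf-colored: properly colored and every vertex has, for each color (of the graph)
different from its own, at least one out-neighbor of that color. -/
def SfColored (E : V → V → Prop) (σ : V → C) : Prop :=
  ProperlyColored E σ ∧ ∀ x y : V, σ y ≠ σ x → ∃ z, E x z ∧ σ z = σ y

/-- A triple set is consistent if some tree displays all of its triples. -/
def Consistent (R : Set (V × V × V)) : Prop :=
  ∃ T : PhyloTree V, T.DisplaysSet R

/-- The closure `cl(R)`: all triples displayed by every tree displaying `R`. -/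
def tripleClosure (R : Set (V × V × V)) : Set (V × V × V) :=
  {t | ∀ T : PhyloTree V, T.DisplaysSet R → T.Displays t.1 t.2.1 t.2.2}

/-- `(T,σ)` is a least resolved tree for `(E,σ)`: it explains `(E,σ)` and no tree
obtained from it by contracting an edge (i.e. by removing a non-root inner cluster)
explains `(E,σ)`. -/
def IsLRT (T : PhyloTree V) (σ : V → C) (E : V → V → Prop) : Prop :=
  Explains T σ E ∧
    ∀ A ∈ T.clusters, A ≠ Set.univ → 1 < A.ncard →
      ∀ T' : PhyloTree V, T'.clusters = T.clusters \ {A} → ¬ Explains T' σ E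

end BMG

section Aho

variable {V : Type*}

/-- Adjacency in the Aho graph `[R,L]`: `x` and `y` are joined whenever `xy|z ∈ R`
for some `z ∈ L` (only triples with all leaves in `L` are taken into account). -/
def ahoAdj (R : Set (V × V × V)) (L : Set V) (x y : V) : Prop :=
  x ∈ L ∧ y ∈ L ∧ ∃ z ∈ L, (x, y, z) ∈ R ∨ (y, x, z) ∈ R

/-- The vertex set of the connected component of `x` in the Aho graph `[R,L]`. -/
def ahoComponent (R : Set (V × V × V)) (L : Set V) (x : V) : Set V :=
  {y | Relation.ReflTransGen (ahoAdj R L) x y}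

/-- The clusters of the Aho tree `Aho(R, V)`: the full leaf set, and recursively the
connected components of the Aho graphs. -/
inductive IsAhoCluster (R : Set (V × V × V)) : Set V → Prop
  | univ : IsAhoCluster R Set.univ
  | component {L : Set V} {x : V} :
      IsAhoCluster R L → x ∈ L → IsAhoCluster R (ahoComponent R L x)

/-- `T` is the Aho tree (`BUILD` tree) of the triple set `R` on the full leaf set. -/
def IsAhoTree (R : Set (V × V × V)) (T : PhyloTree V) : Prop :=
  T.clusters = {A | IsAhoCluster R A}

/-- The union of the leaf sets of the triples in `R`. -/
def tripleLeaves (R : Set (V × V × V)) : Set V :=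
  {v | ∃ t ∈ R, v = t.1 ∨ v = t.2.1 ∨ v = t.2.2}

end Aho

/-!
`b` and `b'` are best matches of `a` of the same color, so `lca(a,b) = lca(a,b')`. In a binary
tree this cluster has two children; the child containing `a` can contain neither `b` nor `b'`,
so both lie in the other child and `lca(b,b')` is strictly below `lca(a,b)`.
-/

namespace PhyloTree

variable {V : Type*} (T : PhyloTree V)

lemma lca_comm (x y : V) : T.lca x y = T.lca y x := by
  unfold lca
  congr 1
  ext A
  exact and_congr_right' and_comm

lemma left_mem_lca (x y : V) : x ∈ T.lca x y :=
  Set.mem_sInter.mpr fun _ hA => hA.2.1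

lemma right_mem_lca (x y : V) : y ∈ T.lca x y :=
  Set.mem_sInter.mpr fun _ hA => hA.2.2

variable {T} in
lemma lca_subset {x y : V} {A : Set V} (hA : A ∈ T.clusters) (hx : x ∈ A) (hy : y ∈ A) :
    T.lca x y ⊆ A :=
  Set.sInter_subset_of_mem ⟨hA, hx, hy⟩

/-- The clusters containing `x` form a chain, so the (finitely many) clusters containing `x` and
`y` have a least element, which is their intersection. -/
lemma lca_mem_clusters [Finite V] (x y : V) : T.lca x y ∈ T.clusters := by
  set S : Set (Set V) := {A | A ∈ T.clusters ∧ x ∈ A ∧ y ∈ A}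
  obtain ⟨m, hmS, hmin⟩ :=
    (Set.toFinite S).exists_minimal ⟨Set.univ, T.univ_mem, trivial, trivial⟩
  have hm_le : ∀ A ∈ S, m ⊆ A := fun A hA => by
    rcases T.nested m hmS.1 A hA.1 with h | h | h
    · exact h
    · exact hmin hA h
    · exact absurd h (Set.not_disjoint_iff.mpr ⟨x, hmS.2.1, hA.2.1⟩)
  have : T.lca x y = m :=
    (Set.sInter_subset_of_mem hmS).antisymm (Set.subset_sInter hm_le)
  exact this ▸ hmS.1

/-- Both `b` and `c` lie in the part `Q` not containing `a`. -/
lemma lca_ssubset_of_lca_eq_of_union_eq {a b c : V} (h : T.lca a b = T.lca a c)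
    {P Q : Set V} (hP : P ∈ T.clusters) (hQ : Q ∈ T.clusters) (hPQ : P ∪ Q = T.lca a b)
    (hPA : P ⊂ T.lca a b) (hQA : Q ⊂ T.lca a b) (haP : a ∈ P) :
    T.lca b c ⊂ T.lca a b := by
  have not_mem_P : ∀ {x}, T.lca a x = T.lca a b → x ∉ P := fun hx hxP =>
    hPA.not_subset (hx ▸ lca_subset hP haP hxP)
  have mem_Q : ∀ {x}, T.lca a x = T.lca a b → x ∈ Q := fun {x} hx =>
    ((hPQ ▸ hx ▸ T.right_mem_lca a x : x ∈ P ∪ Q)).resolve_left (not_mem_P hx)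
  exact (lca_subset hQ (mem_Q rfl) (mem_Q h.symm)).trans_ssubset hQA

lemma IsBinary.lca_ssubset_of_lca_eq [Finite V] {T : PhyloTree V} (hT : T.IsBinary)
    {a b c : V} (hab : a ≠ b) (h : T.lca a b = T.lca a c) : T.lca b c ⊂ T.lca a b := by
  have hcard : 1 < (T.lca a b).ncard :=
    (Set.one_lt_ncard (Set.toFinite _)).mpr ⟨a, T.left_mem_lca a b, b, T.right_mem_lca a b, hab⟩
  obtain ⟨P, hP, Q, hQ, -, hPQ, hPA, hQA⟩ := hT _ (T.lca_mem_clusters a b) hcard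
  rcases (hPQ ▸ T.left_mem_lca a b : a ∈ P ∪ Q) with haP | haQ
  · exact T.lca_ssubset_of_lca_eq_of_union_eq h hP hQ hPQ hPA hQA haP
  · exact T.lca_ssubset_of_lca_eq_of_union_eq h hQ hP (Set.union_comm P Q ▸ hPQ) hQA hPA haQ

end PhyloTree

lemma bestMatch.lca_eq {V C : Type*} {T : PhyloTree V} {σ : V → C} {x y z : V}
    (hy : bestMatch T σ x y) (hz : bestMatch T σ x z) (hyz : σ y = σ z) :
    T.lca x y = T.lca x z :=
  (hy.2 z hyz.symm).antisymm (hz.2 y hyz)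

theorem stmt0_general {V C : Type*} [Fintype V] (E : V → V → Prop) (σ : V → C)
    (T : PhyloTree V) (hbin : T.IsBinary) (hexp : Explains T σ E)
    (a b b' : V) (hf : (a, b, b') ∈ forbiddenTriples E σ) :
    T.Displays b b' a := by
  obtain ⟨hσab, hσbb', hbb', hEab, hEab'⟩ := hf
  have hlca : T.lca a b = T.lca a b' :=
    ((hexp a b).mp hEab).lca_eq ((hexp a b').mp hEab') hσbb'
  have hab : a ≠ b := ne_of_apply_ne σ hσab
  have hab' : a ≠ b' := ne_of_apply_ne σ (hσbb' ▸ hσab)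
  refine ⟨hbb', hab.symm, hab'.symm, ?_, ?_⟩
  · rw [T.lca_comm b a]
    exact hbin.lca_ssubset_of_lca_eq hab hlca
  · rw [T.lca_comm b a, T.lca_comm b' a, hlca]

/-- Lemma: infer-bba-triple.
Let `(G,σ)` be a BMG that is explained by a binary tree `(T,σ)`. If `ab|b'` is a
forbidden triple of `(G,σ)` with `σ(b)=σ(b')`, then `(T,σ)` displays the triple `bb'|a`. -/
theorem stmt0 {V C : Type*} [Fintype V] (E : V → V → Prop) (σ : V → C)
    (T : PhyloTree V) (hbin : T.IsBinary) (hexp : Explains T σ E)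
    (a b b' : V) (hf : (a, b, b') ∈ forbiddenTriples E σ) (hcol : σ b = σ b') :
    T.Displays b b' a :=
  stmt0_general E σ T hbin hexp a b b' hf
end

section
/- Let (G,σ) be an sf-colored digraph with nonempty vertex set L. Let L_{R,F} be the union of the leaf sets of the triples in R(G,σ)∪F(G,σ) and L_{Rbin} the union of the leaf sets of the triples in R^bin(G,σ). Then the following statements are equivalent: (1) L_{R,F}=L and L_{Rbin}=L; (2) R(G,σ)∪F(G,σ) is nonempty; (3) R^bin(G,σ) is nonempty; (4) (G,σ) uses at least two colors and contains two vertices of the same color. -/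
section NoVertexLost

variable {V C : Type*} (E : V → V → Prop) (σ : V → C)

lemma mem_tripleLeaves_of_mem {R : Set (V × V × V)} {a b c : V} (h : (a, b, c) ∈ R) :
    a ∈ tripleLeaves R ∧ b ∈ tripleLeaves R ∧ c ∈ tripleLeaves R :=
  ⟨⟨_, h, Or.inl rfl⟩, ⟨_, h, Or.inr (Or.inl rfl)⟩, ⟨_, h, Or.inr (Or.inr rfl)⟩⟩

lemma nonempty_of_tripleLeaves_eq_univ [Nonempty V] {R : Set (V × V × V)}
    (h : tripleLeaves R = Set.univ) : R.Nonempty := by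
  obtain ⟨t, ht, -⟩ : Classical.arbitrary V ∈ tripleLeaves R := h ▸ Set.mem_univ _
  exact ⟨t, ht⟩

lemma mem_informativeTriples_union_forbiddenTriples {a b b' : V} (hab : σ a ≠ σ b)
    (hbb' : σ b = σ b') (hne : b ≠ b') (hE : E a b) :
    (a, b, b') ∈ informativeTriples E σ ∪ forbiddenTriples E σ := by
  by_cases hE' : E a b'
  · exact Or.inr ⟨hab, hbb', hne, hE, hE'⟩
  · exact Or.inl ⟨hab, hbb', hE, hE'⟩

lemma tripleLeaves_union_subset_tripleLeaves_rbin :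
    tripleLeaves (informativeTriples E σ ∪ forbiddenTriples E σ) ⊆
      tripleLeaves (Rbin E σ) := by
  rintro v ⟨⟨a, b, b'⟩, hR | hF, hv⟩
  · exact ⟨_, Or.inl hR, hv⟩
  · refine ⟨(b, b', a), Or.inr hF, ?_⟩
    rcases hv with h | h | h <;> simp [h]

lemma union_nonempty_iff_rbin_nonempty :
    (informativeTriples E σ ∪ forbiddenTriples E σ).Nonempty ↔ (Rbin E σ).Nonempty := by
  constructor
  · rintro ⟨t, ht | ht⟩
    · exact ⟨t, Or.inl ht⟩
    · exact ⟨(t.2.1, t.2.2, t.1), Or.inr ht⟩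
  · rintro ⟨t, ht | ht⟩
    · exact ⟨t, Or.inl ht⟩
    · exact ⟨(t.2.2, t.1, t.2.1), Or.inr ht⟩

lemma exists_colors_of_union_nonempty
    (h : (informativeTriples E σ ∪ forbiddenTriples E σ).Nonempty) :
    (∃ x y : V, σ x ≠ σ y) ∧ ∃ x y : V, x ≠ y ∧ σ x = σ y := by
  obtain ⟨⟨a, b, b'⟩, ⟨hab, hbb', hE, hE'⟩ | ⟨hab, hbb', hne, -⟩⟩ := h
  · exact ⟨⟨a, b, hab⟩, b, b', fun h => hE' (h ▸ hE), hbb'⟩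
  · exact ⟨⟨a, b, hab⟩, b, b', hne, hbb'⟩

/-- If `v` shares its color, it is met as a target of some `a` of another color;
otherwise `v` is the source `a` of a triple on a color class with two vertices. -/
lemma mem_tripleLeaves_of_sfColored (hsf : SfColored E σ) (hcol : ∃ x y : V, σ x ≠ σ y)
    (hpair : ∃ b b' : V, b ≠ b' ∧ σ b = σ b') (v : V) :
    v ∈ tripleLeaves (informativeTriples E σ ∪ forbiddenTriples E σ) := by
  by_cases hu : ∃ u, u ≠ v ∧ σ u = σ v
  · obtain ⟨u, huv, hu⟩ := hu
    obtain ⟨a, ha⟩ : ∃ a, σ a ≠ σ v := by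
      obtain ⟨x, y, hxy⟩ := hcol
      by_cases hx : σ x = σ v
      · exact ⟨y, fun h => hxy (hx.trans h.symm)⟩
      · exact ⟨x, hx⟩
    obtain ⟨z, hEz, hz⟩ := hsf.2 a v (Ne.symm ha)
    have haz : σ a ≠ σ z := hz ▸ ha
    by_cases hzv : z = v
    · subst hzv
      exact (mem_tripleLeaves_of_mem
        (mem_informativeTriples_union_forbiddenTriples E σ haz hu.symm huv.symm hEz)).2.1
    · exact (mem_tripleLeaves_of_mem
        (mem_informativeTriples_union_forbiddenTriples E σ haz hz hzv hEz)).2.2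
  · push Not at hu
    obtain ⟨b, b', hbb', hb⟩ := hpair
    have hbv : σ b ≠ σ v := fun h =>
      hbb' ((not_not.1 fun hne => hu b hne h).trans
        (not_not.1 fun hne => hu b' hne (hb.symm.trans h)).symm)
    obtain ⟨z, hEz, hz⟩ := hsf.2 v b hbv
    obtain ⟨w, hzw, hw⟩ : ∃ w, z ≠ w ∧ σ z = σ w := by
      by_cases hzb : z = b
      · exact ⟨b', hzb ▸ hbb', hz.trans hb⟩
      · exact ⟨b, hzb, hz⟩
    exact (mem_tripleLeaves_of_mem
      (mem_informativeTriples_union_forbiddenTriples E σ (hz ▸ hbv.symm) hw hzw hEz)).1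

end NoVertexLost

theorem stmt6_general {V C : Type*} [Nonempty V] (E : V → V → Prop) (σ : V → C)
    (hsf : SfColored E σ) :
    ((tripleLeaves (informativeTriples E σ ∪ forbiddenTriples E σ) = Set.univ ∧
        tripleLeaves (Rbin E σ) = Set.univ) ↔
      (informativeTriples E σ ∪ forbiddenTriples E σ).Nonempty) ∧
    ((informativeTriples E σ ∪ forbiddenTriples E σ).Nonempty ↔ (Rbin E σ).Nonempty) ∧
    ((Rbin E σ).Nonempty ↔
      ((∃ x y : V, σ x ≠ σ y) ∧ ∃ x y : V, x ≠ y ∧ σ x = σ y)) := by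
  have h23 := union_nonempty_iff_rbin_nonempty E σ
  have h24 := exists_colors_of_union_nonempty E σ
  have h41 (h : (∃ x y : V, σ x ≠ σ y) ∧ ∃ x y : V, x ≠ y ∧ σ x = σ y) :
      tripleLeaves (informativeTriples E σ ∪ forbiddenTriples E σ) = Set.univ :=
    Set.eq_univ_of_forall (mem_tripleLeaves_of_sfColored E σ hsf h.1 h.2)
  refine ⟨⟨fun h => nonempty_of_tripleLeaves_eq_univ h.1, fun h => ?_⟩, h23,
    h23.symm.trans ⟨h24, fun h => nonempty_of_tripleLeaves_eq_univ (h41 h)⟩⟩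
  have hRF := h41 (h24 h)
  exact ⟨hRF, Set.eq_univ_of_univ_subset
    (hRF ▸ tripleLeaves_union_subset_tripleLeaves_rbin E σ)⟩

/-- Lemma: no-vertex-lost.
Let `(G,σ)` be an sf-colored digraph with nonempty vertex set `L`. Let `L_{R,F}` be
the union of the leaf sets of the triples in `R(G,σ) ∪ F(G,σ)` and `L_{Rbin}` the union
of the leaf sets of the triples in `R^bin(G,σ)`. Then the following are equivalent:
(1) `L_{R,F} = L` and `L_{Rbin} = L`; (2) `R(G,σ) ∪ F(G,σ) ≠ ∅`; (3) `R^bin(G,σ) ≠ ∅`;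
(4) `(G,σ)` uses at least two colors and contains two vertices of the same color. -/
theorem stmt6 {V C : Type*} [Fintype V] [Nonempty V] (E : V → V → Prop) (σ : V → C)
    (hsf : SfColored E σ) :
    ((tripleLeaves (informativeTriples E σ ∪ forbiddenTriples E σ) = Set.univ ∧
        tripleLeaves (Rbin E σ) = Set.univ) ↔
      (informativeTriples E σ ∪ forbiddenTriples E σ).Nonempty) ∧
    ((informativeTriples E σ ∪ forbiddenTriples E σ).Nonempty ↔ (Rbin E σ).Nonempty) ∧
    ((Rbin E σ).Nonempty ↔
      ((∃ x y : V, σ x ≠ σ y) ∧ ∃ x y : V, x ≠ y ∧ σ x = σ y)) :=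
  stmt6_general E σ hsf
end

section
/- Let (G,σ) be a binary-explainable BMG with vertex set L and set R^bin := R^bin(G,σ). Then, for any two distinct connected components C and C' of the Aho graph H := [R^bin, L], the subgraph of H induced by L' := V(C) ∪ V(C') equals the Aho graph [R^bin restricted to L', L'], and this graph is exactly the disjoint union of C and C'. -/
/-!
In a BMG every vertex has an out-neighbour of every other colour. Let `C₁ ≠ C₂` be components
of the Aho graph of `R^bin` and let `uv` be an edge inside `C₁` witnessed by a triple whose third
leaf `z` lies outside `C₁ ∪ C₂`. If `uv|z` is informative, either some vertex of `C₁ ∪ C₂` can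
replace `z`, or the colour `k = σ v` misses `C₂`; in the latter case a vertex `y ∈ C₂` has all
vertices of colour `k` as out-neighbours, and the forbidden triple `yv|z` puts `z` into `C₁`.
If `uv|z` comes from the forbidden triple `zu|v`, then `z` has all vertices of colour `σ u`
as out-neighbours, hence this colour misses `C₂`, and `y ∈ C₂` replaces `z` as above. So the
edges of the Aho graph inside `C₁ ∪ C₂` survive the restriction to `C₁ ∪ C₂`.
-/

namespace PhyloTree

variable {V : Type*}

theorem lca_subset_or_subset (T : PhyloTree V) (x w w' : V) :
    T.lca x w ⊆ T.lca x w' ∨ T.lca x w' ⊆ T.lca x w := by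
  by_cases h : ∀ A ∈ T.clusters, x ∈ A → w' ∈ A → w ∈ A
  · exact Or.inl <| Set.sInter_subset_sInter fun A ⟨hA, hx, hw'⟩ => ⟨hA, hx, h A hA hx hw'⟩
  · push Not at h
    obtain ⟨A, hA, hx, hw', hw⟩ := h
    refine Or.inr <| calc
      T.lca x w' ⊆ A := Set.sInter_subset_of_mem ⟨hA, hx, hw'⟩
      _ ⊆ T.lca x w := Set.subset_sInter ?_
    rintro B ⟨hB, hxB, hwB⟩
    rcases T.nested A hA B hB with hAB | hBA | hd
    · exact hAB
    · exact absurd (hBA hwB) hw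
    · exact absurd hxB (Set.disjoint_left.mp hd hx)

end PhyloTree

section BestMatch

variable {V Γ : Type*} {E : V → V → Prop} {σ : V → Γ}

theorem Explains.sfColored [Finite V] {T : PhyloTree V} (hT : Explains T σ E) :
    SfColored E σ := by
  refine ⟨fun x y hxy => ((hT x y).mp hxy).1, fun x c hc => ?_⟩
  obtain ⟨m, hm, hmin⟩ :=
    Set.Finite.exists_minimalFor (fun w => T.lca x w) {w | σ w = σ c} (Set.toFinite _) ⟨c, rfl⟩
  refine ⟨m, (hT x m).mpr ⟨fun h => hc (h.trans hm).symm, fun y hy => ?_⟩, hm⟩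
  exact (T.lca_subset_or_subset x m y).elim id (hmin (hy.trans hm))

end BestMatch

section AhoGraph

variable {V : Type*} {R : Set (V × V × V)} {L L' : Set V} {x y u v : V}

instance : Std.Symm (ahoAdj R L) where
  symm _ _ := fun ⟨hu, hv, z, hz, h⟩ => ⟨hv, hu, z, hz, h.symm⟩

theorem ahoAdj.mono (hL : L ⊆ L') (h : ahoAdj R L u v) : ahoAdj R L' u v :=
  let ⟨hu, hv, z, hz, ht⟩ := h
  ⟨hL hu, hL hv, z, hL hz, ht⟩

theorem mem_ahoComponent_self : x ∈ ahoComponent R L x :=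
  Relation.ReflTransGen.refl

theorem mem_ahoComponent_of_ahoAdj (hu : u ∈ ahoComponent R L x) (h : ahoAdj R L u v) :
    v ∈ ahoComponent R L x :=
  Relation.ReflTransGen.tail hu h

theorem ahoComponent_eq_of_mem (hu : u ∈ ahoComponent R L x) :
    ahoComponent R L u = ahoComponent R L x := by
  ext w
  exact ⟨hu.trans, (Std.Symm.symm _ _ hu : Relation.ReflTransGen (ahoAdj R L) u x).trans⟩

theorem disjoint_ahoComponent_of_ne (h : ahoComponent R L x ≠ ahoComponent R L y) :
    Disjoint (ahoComponent R L x) (ahoComponent R L y) :=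
  Set.disjoint_left.mpr fun _ hx hy =>
    h ((ahoComponent_eq_of_mem hx).symm.trans (ahoComponent_eq_of_mem hy))

theorem ahoComponent_eq_of_forall_ahoAdj
    (hres : ∀ a ∈ ahoComponent R Set.univ x, ∀ b, ahoAdj R Set.univ a b → ahoAdj R L a b)
    (hu : u ∈ ahoComponent R Set.univ x) :
    ahoComponent R L u = ahoComponent R Set.univ x := by
  have hreach : ∀ w ∈ ahoComponent R Set.univ x, w ∈ ahoComponent R L x := by
    intro w hw
    induction hw with
    | refl => exact mem_ahoComponent_self
    | tail ha hab ih => exact mem_ahoComponent_of_ahoAdj ih (hres _ ha _ hab)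
  rw [ahoComponent_eq_of_mem (hreach u hu)]
  refine Set.Subset.antisymm (fun w hw => ?_) hreach
  exact Relation.ReflTransGen.mono (fun _ _ => ahoAdj.mono (Set.subset_univ L)) _ _ hw

end AhoGraph

section Rbin

variable {V Γ : Type*} {E : V → V → Prop} {σ : V → Γ} {x y u v w z a : V}

theorem ahoAdj_of_mem_informativeTriples (h : (a, u, v) ∈ informativeTriples E σ) :
    ahoAdj (Rbin E σ) Set.univ a u :=
  ⟨trivial, trivial, v, trivial, Or.inl (Or.inl h)⟩

theorem ahoAdj_of_mem_forbiddenTriples (h : (a, u, v) ∈ forbiddenTriples E σ) :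
    ahoAdj (Rbin E σ) Set.univ u v :=
  ⟨trivial, trivial, a, trivial, Or.inl (Or.inr h)⟩

theorem ProperlyColored.mem_ahoComponent_of_edges (hE : ProperlyColored E σ)
    (hv : v ∈ ahoComponent (Rbin E σ) Set.univ x) (hav : E a v) (haw : E a w)
    (hσ : σ w = σ v) : w ∈ ahoComponent (Rbin E σ) Set.univ x := by
  by_cases hvw : v = w
  · exact hvw ▸ hv
  · exact mem_ahoComponent_of_ahoAdj hv
      (ahoAdj_of_mem_forbiddenTriples ⟨hE a v hav, hσ.symm, hvw, hav, haw⟩)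

theorem SfColored.edge_of_forall_color_ne (hsf : SfColored E σ)
    (hy : y ∈ ahoComponent (Rbin E σ) Set.univ x)
    (hcol : ∀ c ∈ ahoComponent (Rbin E σ) Set.univ x, σ c ≠ σ v) (hw : σ w = σ v) :
    E y w := by
  obtain ⟨d, hyd, hd⟩ := hsf.2 y v (hcol y hy).symm
  by_contra hyw
  have hyd' : ahoAdj (Rbin E σ) Set.univ y d :=
    ahoAdj_of_mem_informativeTriples ⟨hsf.1 y d hyd, hd.trans hw.symm, hyd, hyw⟩
  exact hcol d (mem_ahoComponent_of_ahoAdj hy hyd') hd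

theorem SfColored.exists_mem_union_of_mem_Rbin (hsf : SfColored E σ)
    (hdisj : Disjoint (ahoComponent (Rbin E σ) Set.univ x) (ahoComponent (Rbin E σ) Set.univ y))
    (hu : u ∈ ahoComponent (Rbin E σ) Set.univ x) (hv : v ∈ ahoComponent (Rbin E σ) Set.univ x)
    (hz : z ∉ ahoComponent (Rbin E σ) Set.univ x) (h : (u, v, z) ∈ Rbin E σ) :
    ∃ z' ∈ ahoComponent (Rbin E σ) Set.univ x ∪ ahoComponent (Rbin E σ) Set.univ y,
      (u, v, z') ∈ Rbin E σ := by
  rcases h with ⟨huv, hvz, hEuv, -⟩ | ⟨hzu, huv, hne, hEzu, -⟩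
  · by_contra hcon
    push Not at hcon
    have hcol : ∀ c ∈ ahoComponent (Rbin E σ) Set.univ y, σ c ≠ σ v := by
      intro c hc hσ
      have hEuc : E u c := by
        by_contra hn
        exact hcon c (Or.inr hc) (Or.inl ⟨huv, hσ.symm, hEuv, hn⟩)
      exact Set.disjoint_left.mp hdisj (hsf.1.mem_ahoComponent_of_edges hv hEuv hEuc hσ) hc
    have hEy := fun w (hw : σ w = σ v) => hsf.edge_of_forall_color_ne mem_ahoComponent_self hcol hw
    exact hz (hsf.1.mem_ahoComponent_of_edges hv (hEy v rfl) (hEy z hvz.symm) hvz.symm)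
  · have hEz : ∀ w, σ w = σ u → E z w := by
      intro w hw
      by_contra hn
      have hzu' : ahoAdj (Rbin E σ) Set.univ z u :=
        ahoAdj_of_mem_informativeTriples (v := w) ⟨hzu, hw.symm, hEzu, hn⟩
      exact hz (mem_ahoComponent_of_ahoAdj hu (Std.Symm.symm _ _ hzu'))
    have hcol : ∀ c ∈ ahoComponent (Rbin E σ) Set.univ y, σ c ≠ σ u := fun c hc hσ =>
      Set.disjoint_left.mp hdisj (hsf.1.mem_ahoComponent_of_edges hu hEzu (hEz c hσ) hσ) hc
    have hEy := fun w (hw : σ w = σ u) => hsf.edge_of_forall_color_ne mem_ahoComponent_self hcol hw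
    exact ⟨y, Or.inr mem_ahoComponent_self,
      Or.inr ⟨hcol y mem_ahoComponent_self, huv, hne, hEy u rfl, hEy v huv.symm⟩⟩

theorem SfColored.ahoAdj_union_of_ahoAdj (hsf : SfColored E σ)
    (hdisj : Disjoint (ahoComponent (Rbin E σ) Set.univ x) (ahoComponent (Rbin E σ) Set.univ y))
    (hu : u ∈ ahoComponent (Rbin E σ) Set.univ x) (h : ahoAdj (Rbin E σ) Set.univ u v) :
    ahoAdj (Rbin E σ)
      (ahoComponent (Rbin E σ) Set.univ x ∪ ahoComponent (Rbin E σ) Set.univ y) u v := by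
  have hv := mem_ahoComponent_of_ahoAdj hu h
  obtain ⟨-, -, z, -, ht⟩ := h
  refine ⟨Or.inl hu, Or.inl hv, ?_⟩
  by_cases hz : z ∈ ahoComponent (Rbin E σ) Set.univ x ∪ ahoComponent (Rbin E σ) Set.univ y
  · exact ⟨z, hz, ht⟩
  have hzx := fun h => hz (Or.inl h)
  rcases ht with ht | ht
  · obtain ⟨z', hz', h'⟩ := hsf.exists_mem_union_of_mem_Rbin hdisj hu hv hzx ht
    exact ⟨z', hz', Or.inl h'⟩
  · obtain ⟨z', hz', h'⟩ := hsf.exists_mem_union_of_mem_Rbin hdisj hv hu hzx ht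
    exact ⟨z', hz', Or.inr h'⟩

end Rbin

/-- Lemma: Rbin-triple-components.
Let `(G,σ)` be a binary-explainable BMG with vertex set `L` and `R^bin := R^bin(G,σ)`.
Then, for any two distinct connected components `C` and `C'` of the Aho graph
`H := [R^bin, L]`, the subgraph of `H` induced by `L' := V(C) ∪ V(C')` equals the Aho
graph `[R^bin restricted to L', L']`, and this graph is exactly the disjoint union of
`C` and `C'` (i.e. its connected components are precisely `C` and `C'`). -/
theorem stmt8 {V Γ : Type*} [Fintype V] (E : V → V → Prop) (σ : V → Γ)
    (hbe : BinaryExplainable E σ)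
    (x y : V) (Cx Cy L' : Set V)
    (hCx : Cx = ahoComponent (Rbin E σ) Set.univ x)
    (hCy : Cy = ahoComponent (Rbin E σ) Set.univ y)
    (hne : Cx ≠ Cy) (hL' : L' = Cx ∪ Cy) :
    (∀ u v : V,
        (u ∈ L' ∧ v ∈ L' ∧ ahoAdj (Rbin E σ) Set.univ u v) ↔ ahoAdj (Rbin E σ) L' u v) ∧
    Disjoint Cx Cy ∧
    (∀ u ∈ Cx, ahoComponent (Rbin E σ) L' u = Cx) ∧
    (∀ u ∈ Cy, ahoComponent (Rbin E σ) L' u = Cy) := by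
  obtain ⟨T, -, hT⟩ := hbe
  have hsf := hT.sfColored
  subst hCx hCy hL'
  have hdisj := disjoint_ahoComponent_of_ne hne
  have hres : ∀ u ∈ ahoComponent (Rbin E σ) Set.univ x ∪ ahoComponent (Rbin E σ) Set.univ y,
      ∀ v, ahoAdj (Rbin E σ) Set.univ u v → ahoAdj (Rbin E σ)
        (ahoComponent (Rbin E σ) Set.univ x ∪ ahoComponent (Rbin E σ) Set.univ y) u v := by
    rintro u (hu | hu) v h
    · exact hsf.ahoAdj_union_of_ahoAdj hdisj hu h
    · rw [Set.union_comm]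
      exact hsf.ahoAdj_union_of_ahoAdj hdisj.symm hu h
  refine ⟨fun u v => ⟨fun ⟨hu, _, h⟩ => hres u hu v h,
      fun h => ⟨h.1, h.2.1, h.mono (Set.subset_univ _)⟩⟩, hdisj, fun u hu => ?_, fun u hu => ?_⟩
  · exact ahoComponent_eq_of_forall_ahoAdj (fun a ha => hres a (Or.inl ha)) hu
  · exact ahoComponent_eq_of_forall_ahoAdj (fun a ha => hres a (Or.inr ha)) hu
end
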